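/- arXiv:2102.04370 — 2 statements merged into one kernel-verified Lean document; each statement's English description precedes it below -/
import Mathlib

section
/- For natural numbers d ≥ 1, m ≥ 0, and real α ∈ (0,1], the sum over all k ∈ ℕ_0^d with |k|_1 > m of 2^{-α|k|_1} equals ∑_{ℓ=m+1}^∞ C(ℓ+d-1, d-1) 2^{-αℓ}, and this is bounded above by 2^{-α(m+1)} (1-2^{-α})^{-d} C(m+d, d-1). -/
/-!
Grouping the multi-indices by `n = |k|₁`, stars and bars gives `C(n+d-1, d-1)` indices in the
shell `|k|₁ = n`, each contributing `xⁿ` with `x = 2^{-α} < 1`; this is the identity. For the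
bound write `n = m + 1 + s`: the estimate `C(a+b+r, r) ≤ C(a+r, r) C(b+r, r)` splits off the factor
`x^{m+1} C(m+d, d-1)`, and what remains is the negative binomial series
`∑ₛ C(s+d-1, d-1) xˢ = (1 - x)^{-d}`.
-/

open Finset

namespace Nat

/-- Factor by factor, `(i + 1) (a + b + 1 + i) ≤ (a + 1 + i) (b + 1 + i)` compares the
rising factorials `r! (a+b+1)^(r) ≤ (a+1)^(r) (b+1)^(r)`. -/
theorem choose_add_add_le_mul (a b r : ℕ) :
    (a + b + r).choose r ≤ (a + r).choose r * (b + r).choose r := by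
  have hrising : r ! * (a + b + 1).ascFactorial r ≤
      (a + 1).ascFactorial r * (b + 1).ascFactorial r := by
    simp only [factorial_eq_prod_range_add_one, ascFactorial_eq_prod_range, ← prod_mul_distrib]
    exact prod_le_prod' fun i _ => by nlinarith
  rw [ascFactorial_eq_factorial_mul_choose, ascFactorial_eq_factorial_mul_choose,
    ascFactorial_eq_factorial_mul_choose] at hrising
  refine le_of_mul_le_mul_left ?_ (by positivity : 0 < r ! * r !)
  calc r ! * r ! * (a + b + r).choose r = r ! * (r ! * (a + b + r).choose r) := by ring
    _ ≤ r ! * (a + r).choose r * (r ! * (b + r).choose r) := hrising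
    _ = r ! * r ! * ((a + r).choose r * (b + r).choose r) := by ring

end Nat

theorem card_fun_fin_succ_sum_eq (d n : ℕ) :
    Nat.card {k : Fin (d + 1) → ℕ // ∑ i, k i = n} = (n + d).choose d := by
  rw [← Nat.card_congr (Sym.equivNatSumOfFintype (Fin (d + 1)) n), Nat.card_eq_fintype_card,
    Sym.card_sym_eq_choose, Fintype.card_fin, Nat.add_right_comm, Nat.add_sub_cancel, add_comm,
    Nat.choose_symm_add]

instance (d n : ℕ) : Finite {k : Fin d → ℕ // ∑ i, k i = n} :=
  .of_equiv _ (Sym.equivNatSumOfFintype (Fin d) n)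

section Shells

variable {α : Type*} (N : α → ℕ) (m : ℕ)

def tailEquivSigmaShell : {a // m < N a} ≃ Σ s : ℕ, {a // N a = m + 1 + s} where
  toFun a := ⟨N a - (m + 1), a.1, by have := a.2; omega⟩
  invFun p := ⟨p.2.1, by have := p.2.2; omega⟩
  left_inv _ := rfl
  right_inv := fun ⟨s, a, ha⟩ => by
    obtain rfl : s = N a - (m + 1) := by omega
    rfl

variable {N m}

theorem hasSum_tail_of_finite_shells [∀ n, Finite {a // N a = n}] {f : ℕ → ℝ}
    (hf : ∀ n, 0 ≤ f n)
    (hs : Summable fun s => (Nat.card {a // N a = m + 1 + s} : ℝ) * f (m + 1 + s)) :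
    HasSum (fun a : {a // m < N a} => f (N a))
      (∑' s, (Nat.card {a // N a = m + 1 + s} : ℝ) * f (m + 1 + s)) := by
  have hshell (s : ℕ) : HasSum (fun _ : {a // N a = m + 1 + s} => f (m + 1 + s))
      ((Nat.card {a // N a = m + 1 + s} : ℝ) * f (m + 1 + s)) := by
    rw [← nsmul_eq_mul, ← tsum_const]
    exact Summable.of_finite.hasSum
  set g : (Σ s : ℕ, {a // N a = m + 1 + s}) → ℝ := fun p => f (m + 1 + p.1)
  have hg : Summable g := (summable_sigma_of_nonneg fun _ => hf _).2
    ⟨fun s => (hshell s).summable, hs.congr fun s => (hshell s).tsum_eq.symm⟩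
  have hgsum : HasSum g (∑' s, (Nat.card {a // N a = m + 1 + s} : ℝ) * f (m + 1 + s)) := by
    simpa only [(hg.hasSum.sigma hshell).tsum_eq] using hg.hasSum
  rw [← (tailEquivSigmaShell N m).symm.hasSum_iff]
  convert hgsum using 1
  funext p
  exact congrArg f p.2.2

end Shells

section Tail

variable (d m : ℕ) {x : ℝ}

theorem summable_tail_choose_mul_pow (hx0 : 0 ≤ x) (hx1 : x < 1) :
    Summable fun s => ((m + 1 + s + d).choose d : ℝ) * x ^ (m + 1 + s) := by
  have hnorm : ‖x‖ < 1 := by rwa [Real.norm_of_nonneg hx0]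
  exact (summable_choose_mul_geometric_of_norm_lt_one d hnorm).comp_injective
    (add_right_injective (m + 1))

theorem hasSum_pow_sum_tail (hx0 : 0 ≤ x) (hx1 : x < 1) :
    HasSum (fun k : {k : Fin (d + 1) → ℕ // m < ∑ i, k i} => x ^ ∑ i, (k : Fin (d + 1) → ℕ) i)
      (∑' s, ((m + 1 + s + d).choose d : ℝ) * x ^ (m + 1 + s)) := by
  have h := hasSum_tail_of_finite_shells (N := fun k : Fin (d + 1) → ℕ => ∑ i, k i) (m := m)
    (f := (x ^ ·)) (pow_nonneg hx0)
  simp only [card_fun_fin_succ_sum_eq] at h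
  exact h (summable_tail_choose_mul_pow d m hx0 hx1)

theorem tsum_tail_choose_mul_pow_le (hx0 : 0 ≤ x) (hx1 : x < 1) :
    ∑' s, ((m + 1 + s + d).choose d : ℝ) * x ^ (m + 1 + s)
      ≤ x ^ (m + 1) * ((1 - x)⁻¹) ^ (d + 1) * ((m + 1 + d).choose d : ℝ) := by
  have hgeom := hasSum_choose_mul_geometric_of_norm_lt_one d
    (by rwa [Real.norm_of_nonneg hx0] : ‖x‖ < 1)
  have hterm (s : ℕ) : ((m + 1 + s + d).choose d : ℝ) * x ^ (m + 1 + s)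
      ≤ (m + 1 + d).choose d * x ^ (m + 1) * ((s + d).choose d * x ^ s) := by
    have hchoose := Nat.choose_add_add_le_mul (m + 1) s d
    rw [pow_add]
    calc ((m + 1 + s + d).choose d : ℝ) * (x ^ (m + 1) * x ^ s)
        ≤ ((m + 1 + d).choose d * (s + d).choose d : ℕ) * (x ^ (m + 1) * x ^ s) := by
          gcongr
      _ = _ := by push_cast; ring
  calc ∑' s, ((m + 1 + s + d).choose d : ℝ) * x ^ (m + 1 + s)
      ≤ ∑' s, (m + 1 + d).choose d * x ^ (m + 1) * ((s + d).choose d * x ^ s) :=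
        (summable_tail_choose_mul_pow d m hx0 hx1).tsum_le_tsum hterm (hgeom.summable.mul_left _)
    _ = x ^ (m + 1) * ((1 - x)⁻¹) ^ (d + 1) * ((m + 1 + d).choose d : ℝ) := by
        rw [tsum_mul_left, hgeom.tsum_eq, one_div, inv_pow]
        ring

end Tail

theorem stmt1_general (d m : ℕ) (hd : 1 ≤ d) (α : ℝ) (hα0 : 0 < α) :
    (∑' k : {k : Fin d → ℕ // m < ∑ i, k i},
        (2 : ℝ) ^ (-α * ∑ i, ((k : Fin d → ℕ) i : ℝ)))
      = (∑' s : ℕ, ((m + 1 + s + d - 1).choose (d - 1) : ℝ) *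
          (2 : ℝ) ^ (-α * ((m : ℝ) + 1 + (s : ℝ)))) ∧
    (∑' k : {k : Fin d → ℕ // m < ∑ i, k i},
        (2 : ℝ) ^ (-α * ∑ i, ((k : Fin d → ℕ) i : ℝ)))
      ≤ (2 : ℝ) ^ (-α * ((m : ℝ) + 1)) * ((1 - (2 : ℝ) ^ (-α))⁻¹) ^ d *
          ((m + d).choose (d - 1) : ℝ) := by
  obtain ⟨d, rfl⟩ := Nat.exists_eq_add_of_le' hd
  have hx0 : 0 ≤ (2 : ℝ) ^ (-α) := by positivity
  have hx1 : (2 : ℝ) ^ (-α) < 1 := Real.rpow_lt_one_of_one_lt_of_neg one_lt_two (by linarith)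
  have hpow (n : ℕ) : (2 : ℝ) ^ (-α * n) = ((2 : ℝ) ^ (-α)) ^ n :=
    Real.rpow_mul_natCast zero_le_two _ _
  have hlhs : ∑' k : {k : Fin (d + 1) → ℕ // m < ∑ i, k i},
        (2 : ℝ) ^ (-α * ∑ i, ((k : Fin (d + 1) → ℕ) i : ℝ))
      = ∑' s, ((m + 1 + s + d).choose d : ℝ) * ((2 : ℝ) ^ (-α)) ^ (m + 1 + s) := by
    rw [← (hasSum_pow_sum_tail d m hx0 hx1).tsum_eq]
    exact tsum_congr fun k => by rw [← Nat.cast_sum, hpow]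
  rw [hlhs, Nat.add_sub_cancel]
  refine ⟨tsum_congr fun s => ?_, ?_⟩
  · rw [show m + 1 + s + (d + 1) - 1 = m + 1 + s + d by omega, ← hpow]
    push_cast
    ring_nf
  · convert tsum_tail_choose_mul_pow_le d m hx0 hx1 using 3
    · rw [← hpow]; push_cast; ring_nf
    · ring_nf

theorem stmt1 (d m : ℕ) (hd : 1 ≤ d) (α : ℝ) (hα0 : 0 < α) (hα1 : α ≤ 1) :
    (∑' k : {k : Fin d → ℕ // m < ∑ i, k i},
        (2 : ℝ) ^ (-α * ∑ i, ((k : Fin d → ℕ) i : ℝ)))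
      = (∑' s : ℕ, ((m + 1 + s + d - 1).choose (d - 1) : ℝ) *
          (2 : ℝ) ^ (-α * ((m : ℝ) + 1 + (s : ℝ)))) ∧
    (∑' k : {k : Fin d → ℕ // m < ∑ i, k i},
        (2 : ℝ) ^ (-α * ∑ i, ((k : Fin d → ℕ) i : ℝ)))
      ≤ (2 : ℝ) ^ (-α * ((m : ℝ) + 1)) * ((1 - (2 : ℝ) ^ (-α))⁻¹) ^ d *
          ((m + d).choose (d - 1) : ℝ) :=
  stmt1_general d m hd α hα0
end

section
/- Let f : [0,1] → ℝ be continuous with f(0) = f(1) = 0 and suppose |f(x) - f(y)| ≤ |x-y|^α for all x, y ∈ [0,1], where α ∈ (0,1]. For m ∈ ℕ_0, let R_m(f)(x) = ∑_{s=1}^{2^{m+1}-1} f(2^{-m-1}s) φ(2^{m+1}x - s + 1), where φ(t) = max(1 - |t-1|, 0) is the hat function. Then there exists a piecewise-linear function S with values S(2^{-m-1}s) = 2^{-α(m+1)} l_s for integers l_s satisfying l_0 = 0 and |l_s - l_{s-1}| ≤ 1, such that ‖R_m(f) - S‖_∞ ≤ 2^{-α(m+1)-1}. -/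
/-!
Round the samples `g s = f(s 2^{-m-1})` greedily to the lattice `h ℤ`, `h = 2^{-α(m+1)}`: each new
level moves the previous one by the nearest integer step, clamped to `{-1, 0, 1}`. By the Hölder
condition consecutive samples differ by at most `h`, so if the previous level was within `h/2` of
its sample, the required step is at most `3/2` levels and the clamp never bites; hence every level
stays within `h/2` of its sample. Both `R_m(f)` and `S` are combinations of the same hat functions,
which are nonnegative with sum at most `1`, so the uniform error is at most `h/2`.
-/

/-- The hat function `φ(t) = (1 - |t-1|)₊`. -/
noncomputable def hat (t : ℝ) : ℝ := max (1 - |t - 1|) 0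

/-- Piecewise-linear interpolant of `f` at the dyadic points `s·2^{-m-1}`,
`R_m(f)(x) = ∑_{s=1}^{2^{m+1}-1} f(2^{-m-1}s) φ(2^{m+1}x - s + 1)`. -/
noncomputable def Rinterp (m : ℕ) (f : ℝ → ℝ) (x : ℝ) : ℝ :=
  ∑ s ∈ (Finset.Icc 1 (2 ^ (m + 1) - 1) : Finset ℕ),
    f ((s : ℝ) / 2 ^ (m + 1)) * hat (2 ^ (m + 1) * x - s + 1)

lemma hat_nonneg (t : ℝ) : 0 ≤ hat t := le_max_right _ _

lemma hat_sub_add_one (t u : ℝ) : hat (t - u + 1) = max (1 - |t - u|) 0 := by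
  rw [hat, add_sub_cancel_right]

lemma abs_sub_lt_one_of_hat_ne_zero {t u : ℝ} (h : hat (t - u + 1) ≠ 0) : |t - u| < 1 := by
  by_contra! hle
  exact h (by rw [hat_sub_add_one, max_eq_right (by linarith)])

/-- Only the two hats at `⌊t⌋` and `⌊t⌋ + 1` are nonzero at `t`, and they sum to `1`. -/
lemma sum_hat_le_one {t : ℝ} (ht : 0 ≤ t) (a b : ℕ) :
    ∑ s ∈ Finset.Icc a b, hat (t - s + 1) ≤ 1 := by
  set n := ⌊t⌋₊
  have hn : (n : ℝ) ≤ t := Nat.floor_le ht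
  have hn' : t < n + 1 := Nat.lt_floor_add_one t
  have hsupp : ∀ s ∈ (Finset.Icc a b).filter (fun s : ℕ ↦ hat (t - s + 1) ≠ 0),
      s ∈ ({n, n + 1} : Finset ℕ) := by
    intro s hs
    have hts := abs_lt.1 (abs_sub_lt_one_of_hat_ne_zero (Finset.mem_filter.1 hs).2)
    have hlt : s < n + 2 := by exact_mod_cast (by linarith : (s : ℝ) < n + 2)
    have hgt : n < s + 1 := by exact_mod_cast (by linarith : (n : ℝ) < s + 1)
    simp only [Finset.mem_insert, Finset.mem_singleton]
    omega
  have hpair : hat (t - n + 1) + hat (t - (n + 1 : ℕ) + 1) = 1 := by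
    rw [hat_sub_add_one, hat_sub_add_one, abs_of_nonneg (by linarith),
      abs_of_neg (by push_cast; linarith), max_eq_left (by linarith),
      max_eq_left (by push_cast; linarith)]
    push_cast
    ring
  calc ∑ s ∈ Finset.Icc a b, hat (t - s + 1)
      = ∑ s ∈ (Finset.Icc a b).filter (fun s : ℕ ↦ hat (t - s + 1) ≠ 0), hat (t - s + 1) :=
        (Finset.sum_filter_ne_zero _).symm
    _ ≤ ∑ s ∈ ({n, n + 1} : Finset ℕ), hat (t - s + 1) :=
        Finset.sum_le_sum_of_subset_of_nonneg hsupp fun _ _ _ ↦ hat_nonneg _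
    _ = 1 := by rw [Finset.sum_pair (by omega), hpair]

lemma abs_sum_mul_hat_le {t ε : ℝ} (ht : 0 ≤ t) (hε : 0 ≤ ε) (a b : ℕ) {c : ℕ → ℝ}
    (hc : ∀ s ∈ Finset.Icc a b, |c s| ≤ ε) :
    |∑ s ∈ Finset.Icc a b, c s * hat (t - s + 1)| ≤ ε := by
  calc |∑ s ∈ Finset.Icc a b, c s * hat (t - s + 1)|
      ≤ ∑ s ∈ Finset.Icc a b, |c s * hat (t - s + 1)| := Finset.abs_sum_le_sum_abs _ _
    _ ≤ ∑ s ∈ Finset.Icc a b, ε * hat (t - s + 1) := by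
        refine Finset.sum_le_sum fun s hs ↦ ?_
        rw [abs_mul, abs_of_nonneg (hat_nonneg _)]
        exact mul_le_mul_of_nonneg_right (hc s hs) (hat_nonneg _)
    _ = ε * ∑ s ∈ Finset.Icc a b, hat (t - s + 1) := (Finset.mul_sum _ _ _).symm
    _ ≤ ε := mul_le_of_le_one_right hε (sum_hat_le_one ht a b)

noncomputable def clampRound (d : ℝ) : ℤ := max (-1) (min 1 (round d))

lemma abs_clampRound_le (d : ℝ) : |clampRound d| ≤ 1 := by
  rw [clampRound, abs_le]
  omega

lemma abs_sub_clampRound_le {d : ℝ} (hd : |d| ≤ 3 / 2) : |d - clampRound d| ≤ 1 / 2 := by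
  have hr := abs_le.1 (abs_sub_round d)
  have hd' := abs_le.1 hd
  simp only [clampRound, Int.cast_max, Int.cast_min, Int.cast_one, Int.cast_neg]
  set r : ℝ := (round d : ℝ)
  rw [abs_le]
  rcases le_total r 1 with h1 | h1
  · rw [min_eq_right h1]
    rcases le_total (-1) r with h2 | h2
    · rw [max_eq_right h2]; constructor <;> linarith
    · rw [max_eq_left h2]; constructor <;> linarith
  · rw [min_eq_left h1, max_eq_right (by norm_num)]; constructor <;> linarith

noncomputable def greedyLevels (g : ℕ → ℝ) (h : ℝ) : ℕ → ℤ
  | 0 => 0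
  | s + 1 => greedyLevels g h s + clampRound (g (s + 1) / h - greedyLevels g h s)

lemma abs_greedyLevels_succ_sub_le (g : ℕ → ℝ) (h : ℝ) (s : ℕ) :
    |greedyLevels g h (s + 1) - greedyLevels g h s| ≤ 1 := by
  rw [greedyLevels, add_sub_cancel_left]
  exact abs_clampRound_le _

lemma abs_sub_mul_greedyLevels_le {g : ℕ → ℝ} {h : ℝ} (hh : 0 < h) (hg0 : g 0 = 0) {N : ℕ}
    (hstep : ∀ s < N, |g (s + 1) - g s| ≤ h) : ∀ s ≤ N, |g s - h * greedyLevels g h s| ≤ h / 2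
  | 0, _ => by simp [greedyLevels, hg0]; positivity
  | s + 1, hs => by
    have hprev := abs_sub_mul_greedyLevels_le hh hg0 hstep s (by omega)
    set L : ℝ := (greedyLevels g h s : ℝ)
    set d := g (s + 1) / h - L
    have hd : |d| ≤ 3 / 2 := by
      have hd_eq : d = (g (s + 1) - h * L) / h := by rw [sub_div, mul_div_cancel_left₀ _ hh.ne']
      rw [hd_eq, abs_div, abs_of_pos hh, div_le_iff₀ hh]
      calc |g (s + 1) - h * L| ≤ |g (s + 1) - g s| + |g s - h * L| := abs_sub_le _ _ _
        _ ≤ 3 / 2 * h := by linarith [hstep s (by omega)]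
    have herr : g (s + 1) - h * greedyLevels g h (s + 1) = h * (d - clampRound d) := by
      simp only [greedyLevels, Int.cast_add, d, L]
      field_simp
      ring
    rw [herr, abs_mul, abs_of_pos hh]
    nlinarith [abs_sub_clampRound_le hd]

lemma abs_sub_succ_div_le_of_holder {f : ℝ → ℝ} {α : ℝ}
    (hH : ∀ x ∈ Set.Icc (0 : ℝ) 1, ∀ y ∈ Set.Icc (0 : ℝ) 1, |f x - f y| ≤ |x - y| ^ α)
    {N s : ℕ} (hs : s < N) :
    |f ((s + 1 : ℕ) / N) - f (s / N)| ≤ (N : ℝ)⁻¹ ^ α := by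
  have hN : (0 : ℝ) < N := by exact_mod_cast (Nat.zero_le s).trans_lt hs
  have hmem : ∀ k ≤ N, (k : ℝ) / N ∈ Set.Icc (0 : ℝ) 1 := fun k hk ↦
    ⟨by positivity, div_le_one_of_le₀ (by exact_mod_cast hk) hN.le⟩
  have hdist : |((s + 1 : ℕ) : ℝ) / N - s / N| = (N : ℝ)⁻¹ := by
    rw [← sub_div, Nat.cast_succ, add_sub_cancel_left, one_div, abs_of_pos (inv_pos.2 hN)]
  simpa only [hdist] using hH _ (hmem _ hs) _ (hmem _ hs.le)

theorem stmt4_general (α : ℝ) (m : ℕ) (f : ℝ → ℝ) (hf0 : f 0 = 0)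
    (hH : ∀ x ∈ Set.Icc (0 : ℝ) 1, ∀ y ∈ Set.Icc (0 : ℝ) 1, |f x - f y| ≤ |x - y| ^ α) :
    ∃ l : ℕ → ℤ, l 0 = 0 ∧ (∀ s, 1 ≤ s → s ≤ 2 ^ (m + 1) → |l s - l (s - 1)| ≤ 1) ∧
      ∀ x ∈ Set.Icc (0 : ℝ) 1,
        |Rinterp m f x - ∑ s ∈ (Finset.Icc 1 (2 ^ (m + 1) - 1) : Finset ℕ),
            (2 : ℝ) ^ (-α * ((m : ℝ) + 1)) * (l s : ℝ) * hat (2 ^ (m + 1) * x - s + 1)|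
          ≤ (2 : ℝ) ^ (-α * ((m : ℝ) + 1) - 1) := by
  set h : ℝ := (2 : ℝ) ^ (-α * ((m : ℝ) + 1)) with h_def
  have hh : 0 < h := by positivity
  set g : ℕ → ℝ := fun s ↦ f ((s : ℝ) / 2 ^ (m + 1))
  have hscale : ((2 : ℝ) ^ (m + 1))⁻¹ ^ α = h := by
    rw [h_def, ← Real.rpow_natCast, ← Real.rpow_neg zero_le_two, ← Real.rpow_mul zero_le_two]
    push_cast
    ring_nf
  have hstep : ∀ s < 2 ^ (m + 1), |g (s + 1) - g s| ≤ h := fun s hs ↦ by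
    simpa [g, hscale] using abs_sub_succ_div_le_of_holder hH hs
  have hclose := abs_sub_mul_greedyLevels_le hh (by simp [g, hf0]) hstep
  refine ⟨greedyLevels g h, rfl, fun s hs _ ↦ ?_, fun x hx ↦ ?_⟩
  · obtain ⟨n, rfl⟩ := Nat.exists_eq_add_of_le' hs
    exact abs_greedyLevels_succ_sub_le g h n
  · calc _ = |∑ s ∈ Finset.Icc 1 (2 ^ (m + 1) - 1),
            (g s - h * greedyLevels g h s) * hat (2 ^ (m + 1) * x - s + 1)| := by
          rw [Rinterp, ← Finset.sum_sub_distrib]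
          exact congrArg _ (Finset.sum_congr rfl fun s _ ↦ by ring)
      _ ≤ h / 2 := abs_sum_mul_hat_le (by have := hx.1; positivity) (by positivity) _ _
          fun s hs ↦ hclose s ((Finset.mem_Icc.1 hs).2.trans (Nat.sub_le _ _))
      _ = (2 : ℝ) ^ (-α * ((m : ℝ) + 1) - 1) := by
          rw [Real.rpow_sub two_pos, Real.rpow_one]

theorem stmt4 (α : ℝ) (hα0 : 0 < α) (hα1 : α ≤ 1) (m : ℕ) (f : ℝ → ℝ)
    (hf : ContinuousOn f (Set.Icc 0 1)) (hf0 : f 0 = 0) (hf1 : f 1 = 0)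
    (hH : ∀ x ∈ Set.Icc (0 : ℝ) 1, ∀ y ∈ Set.Icc (0 : ℝ) 1, |f x - f y| ≤ |x - y| ^ α) :
    ∃ l : ℕ → ℤ, l 0 = 0 ∧ (∀ s, 1 ≤ s → s ≤ 2 ^ (m + 1) → |l s - l (s - 1)| ≤ 1) ∧
      ∀ x ∈ Set.Icc (0 : ℝ) 1,
        |Rinterp m f x - ∑ s ∈ (Finset.Icc 1 (2 ^ (m + 1) - 1) : Finset ℕ),
            (2 : ℝ) ^ (-α * ((m : ℝ) + 1)) * (l s : ℝ) * hat (2 ^ (m + 1) * x - s + 1)|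
          ≤ (2 : ℝ) ^ (-α * ((m : ℝ) + 1) - 1) :=
  stmt4_general α m f hf0 hH
end
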